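/- arXiv:2207.01048 — 2 statements merged into one kernel-verified Lean document; each statement's English description precedes it below -/
import Mathlib

section
/- Let ×_Σ be a product on components induced by an interaction signature Σ that is commutative, associative, idempotent (A ×_Σ A = A for all A), and satisfies C ×_Σ D ≤ C for any two components C and D with the same interface. Let A and B be components and let 𝒞 be a finite nonempty set of components, all with the same interface E, such that B ×_Σ C = A for every C ∈ 𝒞 (i.e., 𝒞 is a finite set of quotients of A by B sharing interface E). Then there exists a component P with interface E such that B ×_Σ P = A and P ≤ C for every C ∈ 𝒞; namely, P is the ×_Σ-product of all elements of 𝒞. -/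
/-- A timed-event stream (TES): an infinite sequence of observations
`(obs i, time i)` with nonnegative, strictly increasing, non-Zeno timestamps. -/
structure TES (Event : Type) where
  obs : ℕ → Set Event
  time : ℕ → ℝ
  time_nonneg : ∀ i, 0 ≤ time i
  time_strictMono : ∀ i, time i < time (i + 1)
  nonZeno : ∀ t : ℝ, ∃ i, t < time i

/-- A TES is *over* a set of events `E` if all its observables are subsets of `E`. -/
def TES.Over {Event : Type} (σ : TES Event) (E : Set Event) : Prop :=
  ∀ i, σ.obs i ⊆ E

/-- A component: an interface together with a behavior of TESs over that interface. -/
structure Component (Event : Type) where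
  iface : Set Event
  behavior : Set (TES Event)
  behavior_over : ∀ σ ∈ behavior, σ.Over iface

/-- Refinement of components: `Refines B A` means `B ⊑ A`. -/
def Refines {Event : Type} (B A : Component Event) : Prop :=
  B.iface ⊆ A.iface ∧ B.behavior ⊆ A.behavior

/-- Containment of TESs: same timestamps, pointwise contained observables. -/
def TES.Le {Event : Type} (σ τ : TES Event) : Prop :=
  (∀ i, σ.time i = τ.time i) ∧ (∀ i, σ.obs i ⊆ τ.obs i)

/-- Containment of components: `CompLe A B` means `A ≤ B`. -/
def CompLe {Event : Type} (A B : Component Event) : Prop :=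
  A.iface ⊆ B.iface ∧ ∀ σ ∈ A.behavior, ∃ τ ∈ B.behavior, σ.Le τ

/-- `σ.atTime t` is the observable of `σ` at time `t` (∅ if `t` is not a timestamp). -/
def TES.atTime {Event : Type} (σ : TES Event) (t : ℝ) : Set Event :=
  { e | ∃ i, σ.time i = t ∧ e ∈ σ.obs i }

/-- The set of timestamps of a TES. -/
def TES.dom {Event : Type} (σ : TES Event) : Set ℝ :=
  { t | ∃ i, σ.time i = t }

/-- Synchronous composability: shared events occur at the same times. -/
def RSync {Event : Type} (E₁ E₂ : Set Event) (σ τ : TES Event) : Prop :=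
  ∀ t : ℝ, σ.atTime t ∩ E₂ = τ.atTime t ∩ E₁

/-- `IsSyncComp σ τ υ` means `υ = σ ∪ τ`, the synchronous composition of `σ` and `τ`:
`dom υ = dom σ ∪ dom τ` and `υ(t) = σ(t) ∪ τ(t)` for every time `t`. -/
def IsSyncComp {Event : Type} (σ τ υ : TES Event) : Prop :=
  υ.dom = σ.dom ∪ τ.dom ∧ ∀ t : ℝ, υ.atTime t = σ.atTime t ∪ τ.atTime t

/-- The synchronous product `A ⋈ B` of components. -/
def syncProd {Event : Type} (A B : Component Event) : Component Event where
  iface := A.iface ∪ B.iface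
  behavior :=
    { υ | ∃ σ ∈ A.behavior, ∃ τ ∈ B.behavior,
        RSync A.iface B.iface σ τ ∧ IsSyncComp σ τ υ }
  behavior_over := by
    rintro υ ⟨σ, hσ, τ, hτ, _, _, hat⟩ i e he
    have h : e ∈ υ.atTime (υ.time i) := ⟨i, rfl, he⟩
    rw [hat] at h
    rcases h with ⟨j, _, hj⟩ | ⟨j, _, hj⟩
    · exact Set.mem_union_left _ (A.behavior_over σ hσ j hj)
    · exact Set.mem_union_right _ (B.behavior_over τ hτ j hj)

/-- An interaction signature: a composability relation (parametrized by the two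
interfaces) and a composition function producing a TES over the union interface. -/
structure InteractionSig (Event : Type) where
  R : Set Event → Set Event → TES Event → TES Event → Prop
  comp : TES Event → TES Event → TES Event
  comp_over : ∀ (E₁ E₂ : Set Event) (σ τ : TES Event),
    σ.Over E₁ → τ.Over E₂ → (comp σ τ).Over (E₁ ∪ E₂)

/-- The product `A ×_Σ B` of components under an interaction signature. -/
def InteractionSig.prod {Event : Type} (S : InteractionSig Event)
    (A B : Component Event) : Component Event where
  iface := A.iface ∪ B.iface
  behavior :=
    { x | ∃ σ ∈ A.behavior, ∃ τ ∈ B.behavior,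
        S.R A.iface B.iface σ τ ∧ x = S.comp σ τ }
  behavior_over := by
    rintro x ⟨σ, hσ, τ, hτ, _, rfl⟩
    exact S.comp_over _ _ _ _ (A.behavior_over σ hσ) (B.behavior_over τ hτ)

/-- Union of components. -/
def Component.union {Event : Type} (A B : Component Event) : Component Event where
  iface := A.iface ∪ B.iface
  behavior := A.behavior ∪ B.behavior
  behavior_over := by
    rintro σ (h | h) i e he
    · exact Set.mem_union_left _ (A.behavior_over σ h i he)
    · exact Set.mem_union_right _ (B.behavior_over σ h i he)

/-- The unit component `1 = (∅, TES(∅))`. -/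
def unitComponent (Event : Type) : Component Event where
  iface := ∅
  behavior := { σ | σ.Over ∅ }
  behavior_over := fun _ h => h

/-- The zero component `0 = (∅, ∅)`. -/
def zeroComponent (Event : Type) : Component Event where
  iface := ∅
  behavior := ∅
  behavior_over := fun σ h => absurd h (Set.notMem_empty σ)

/-- `InsertsSilentAt σ τ i t`: `τ` is obtained from `σ` by inserting the silent
observation `(∅, t)` between positions `i` and `i+1`. -/
def InsertsSilentAt {Event : Type} (σ τ : TES Event) (i : ℕ) (t : ℝ) : Prop :=
  (∀ k ≤ i, τ.obs k = σ.obs k ∧ τ.time k = σ.time k) ∧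
  τ.obs (i + 1) = ∅ ∧ τ.time (i + 1) = t ∧
  (∀ k, i < k → τ.obs (k + 1) = σ.obs k ∧ τ.time (k + 1) = σ.time k)

/-- A component is closed under insertion of silent observations. -/
def ClosedUnderSilentInsertion {Event : Type} (A : Component Event) : Prop :=
  ∀ σ ∈ A.behavior, ∀ (i : ℕ) (t : ℝ),
    σ.time i < t → t < σ.time (i + 1) →
    ∀ τ : TES Event, InsertsSilentAt σ τ i t → τ ∈ A.behavior

theorem CompLe.refl {Event : Type} (A : Component Event) : CompLe A A :=
  ⟨subset_rfl, fun σ hσ => ⟨σ, hσ, fun _ => rfl, fun _ => subset_rfl⟩⟩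

theorem CompLe.trans {Event : Type} {A B C : Component Event}
    (hAB : CompLe A B) (hBC : CompLe B C) : CompLe A C := by
  refine ⟨hAB.1.trans hBC.1, fun σ hσ => ?_⟩
  obtain ⟨τ, hτ, hτ_time, hτ_obs⟩ := hAB.2 σ hσ
  obtain ⟨υ, hυ, hυ_time, hυ_obs⟩ := hBC.2 τ hτ
  exact ⟨υ, hυ, fun i => (hτ_time i).trans (hυ_time i), fun i => (hτ_obs i).trans (hυ_obs i)⟩

namespace InteractionSig

variable {Event : Type} (S : InteractionSig Event)

theorem prod_iface_of_iface_eq {C D : Component Event} {E : Set Event}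
    (hC : C.iface = E) (hD : D.iface = E) : (S.prod C D).iface = E := by
  change C.iface ∪ D.iface = E
  rw [hC, hD, Set.union_self]

theorem prod_prod_eq_of_prod_eq
    (hassoc : ∀ A B C : Component Event, S.prod (S.prod A B) C = S.prod A (S.prod B C))
    (hidem : ∀ A : Component Event, S.prod A A = A)
    {A B C D : Component Event} (hC : S.prod B C = A) (hD : S.prod B D = A) :
    S.prod B (S.prod C D) = A :=
  calc S.prod B (S.prod C D) = S.prod (S.prod B D) D := by rw [← hassoc, hC, hD]
    _ = S.prod B D := by rw [hassoc, hidem]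
    _ = A := hD

theorem compLe_prod_right
    (hcomm : ∀ A B : Component Event, S.prod A B = S.prod B A)
    (hle : ∀ C D : Component Event, C.iface = D.iface → CompLe (S.prod C D) C)
    {C D : Component Event} (h : C.iface = D.iface) : CompLe (S.prod C D) D :=
  hcomm C D ▸ hle D C h.symm

/-- The witness is the iterated `×_Σ`-product of `𝒞`. -/
theorem exists_mem_forall_compLe {T : Set (Component Event)}
    (hmem : ∀ C ∈ T, ∀ D ∈ T, S.prod C D ∈ T)
    (hleft : ∀ C ∈ T, ∀ D ∈ T, CompLe (S.prod C D) C)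
    (hright : ∀ C ∈ T, ∀ D ∈ T, CompLe (S.prod C D) D)
    {𝒞 : Finset (Component Event)} (hne : 𝒞.Nonempty) (h𝒞 : ∀ C ∈ 𝒞, C ∈ T) :
    ∃ P ∈ T, ∀ C ∈ 𝒞, CompLe P C := by
  induction hne using Finset.Nonempty.cons_induction with
  | singleton C =>
    refine ⟨C, h𝒞 C (Finset.mem_singleton_self C), fun D hD => ?_⟩
    rw [Finset.mem_singleton.mp hD]
    exact CompLe.refl C
  | cons C 𝒟 _ _ ih =>
    have hC : C ∈ T := h𝒞 C (Finset.mem_cons_self C 𝒟)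
    obtain ⟨P, hP, hP_le⟩ := ih fun D hD => h𝒞 D (Finset.mem_cons_of_mem hD)
    refine ⟨S.prod C P, hmem C hC P hP, fun D hD => ?_⟩
    rcases Finset.mem_cons.mp hD with rfl | hD
    · exact hleft D hC P hP
    · exact (hright C hC P hP).trans (hP_le D hD)

end InteractionSig

/-- for a commutative, associative, idempotent product satisfying
`C ×_Σ D ≤ C` for equal interfaces, any finite nonempty set of quotients of `A`
by `B` sharing the same interface `E` has a lower bound that is itself a quotient
with interface `E`. -/
theorem quotients_lowerBound {Event : Type} (S : InteractionSig Event)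
    (hcomm : ∀ A B : Component Event, S.prod A B = S.prod B A)
    (hassoc : ∀ A B C : Component Event, S.prod (S.prod A B) C = S.prod A (S.prod B C))
    (hidem : ∀ A : Component Event, S.prod A A = A)
    (hle : ∀ C D : Component Event, C.iface = D.iface → CompLe (S.prod C D) C)
    (A B : Component Event) (E : Set Event) (𝒞 : Finset (Component Event))
    (hne : 𝒞.Nonempty)
    (hiface : ∀ C ∈ 𝒞, C.iface = E)
    (hquot : ∀ C ∈ 𝒞, S.prod B C = A) :
    ∃ P : Component Event, P.iface = E ∧ S.prod B P = A ∧ ∀ C ∈ 𝒞, CompLe P C := by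
  let quotients : Set (Component Event) := {C | C.iface = E ∧ S.prod B C = A}
  obtain ⟨P, ⟨hP_iface, hP_quot⟩, hP_le⟩ := S.exists_mem_forall_compLe (T := quotients)
    (fun _ ⟨hC, hCq⟩ _ ⟨hD, hDq⟩ =>
      ⟨S.prod_iface_of_iface_eq hC hD, S.prod_prod_eq_of_prod_eq hassoc hidem hCq hDq⟩)
    (fun C ⟨hC, _⟩ D ⟨hD, _⟩ => hle C D (hC.trans hD.symm))
    (fun C ⟨hC, _⟩ D ⟨hD, _⟩ => S.compLe_prod_right hcomm hle (hC.trans hD.symm))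
    hne fun C hC => ⟨hiface C hC, hquot C hC⟩
  exact ⟨P, hP_iface, hP_quot, hP_le⟩
end

section
/- Let ×_Σ be a product on components induced by an interaction signature Σ that is commutative, associative, idempotent, and monotonic (B ⊑ A implies B ×_Σ C ⊑ A ×_Σ C). Let A and B be components and let 𝒞 be a finite nonempty set of components, all with the same interface E, such that every C ∈ 𝒞 satisfies C ≠ 0 and C ×_Σ B ⊑ A (i.e., 𝒞 is a finite set of coordinators making B conformant with A, sharing interface E). Then there exists a component U with interface E such that U ≠ 0, U ×_Σ B ⊑ A, and C ≤ U for every C ∈ 𝒞; namely, U is the union of all elements of 𝒞. -/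
/-!
Take `U` to be the union of the coordinators. Since they all share the interface `E`,
the composability relation of `U ×_Σ B` is evaluated at the same pair of interfaces as that
of each `C ×_Σ B`, so every behavior of `U ×_Σ B` is already a behavior of some `C ×_Σ B`,
hence of `A`.
-/

theorem TES.Le.refl {Event : Type} (σ : TES Event) : σ.Le σ :=
  ⟨fun _ => rfl, fun _ => subset_rfl⟩

namespace Component

variable {Event : Type}

def sUnion (𝒞 : Set (Component Event)) : Component Event where
  iface := ⋃ C ∈ 𝒞, C.iface
  behavior := ⋃ C ∈ 𝒞, C.behavior
  behavior_over := by
    intro σ hσ i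
    obtain ⟨C, hC, hσC⟩ := Set.mem_iUnion₂.mp hσ
    exact (C.behavior_over σ hσC i).trans (Set.subset_biUnion_of_mem hC)

theorem eq_zeroComponent_iff {C : Component Event} :
    C = zeroComponent Event ↔ C.iface = ∅ ∧ C.behavior = ∅ := by
  cases C
  simp only [zeroComponent, Component.mk.injEq]

theorem sUnion_iface_eq {𝒞 : Set (Component Event)} {E : Set Event} (hne : 𝒞.Nonempty)
    (hiface : ∀ C ∈ 𝒞, C.iface = E) : (sUnion 𝒞).iface = E := by
  obtain ⟨C₀, hC₀⟩ := hne
  apply subset_antisymm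
  · exact Set.iUnion₂_subset fun C hC => (hiface C hC).le
  · exact (hiface C₀ hC₀).ge.trans (Set.subset_biUnion_of_mem hC₀)

theorem sUnion_ne_zeroComponent {𝒞 : Set (Component Event)} {C : Component Event}
    (hC : C ∈ 𝒞) (hC0 : C ≠ zeroComponent Event) : sUnion 𝒞 ≠ zeroComponent Event := by
  intro hU
  obtain ⟨hUi, hUb⟩ := eq_zeroComponent_iff.mp hU
  exact hC0 <| eq_zeroComponent_iff.mpr
    ⟨Set.subset_empty_iff.mp (hUi ▸ Set.subset_biUnion_of_mem hC),
     Set.subset_empty_iff.mp (hUb ▸ Set.subset_biUnion_of_mem hC)⟩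

theorem compLe_sUnion {𝒞 : Set (Component Event)} {C : Component Event} (hC : C ∈ 𝒞) :
    CompLe C (sUnion 𝒞) :=
  ⟨Set.subset_biUnion_of_mem hC,
   fun σ hσ => ⟨σ, Set.mem_biUnion hC hσ, TES.Le.refl σ⟩⟩

theorem refines_prod_sUnion (S : InteractionSig Event) {A B : Component Event}
    {𝒞 : Set (Component Event)} {E : Set Event} (hne : 𝒞.Nonempty)
    (hiface : ∀ C ∈ 𝒞, C.iface = E) (href : ∀ C ∈ 𝒞, Refines (S.prod C B) A) :
    Refines (S.prod (sUnion 𝒞) B) A := by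
  obtain ⟨C₀, hC₀⟩ := hne
  have hU : (sUnion 𝒞).iface = E := sUnion_iface_eq ⟨C₀, hC₀⟩ hiface
  refine ⟨?_, ?_⟩
  · change (sUnion 𝒞).iface ∪ B.iface ⊆ A.iface
    rw [hU, ← hiface C₀ hC₀]
    exact (href C₀ hC₀).1
  · rintro x ⟨σ, hσ, τ, hτ, hR, rfl⟩
    obtain ⟨C, hC, hσC⟩ := Set.mem_iUnion₂.mp hσ
    exact (href C hC).2 ⟨σ, hσC, τ, hτ, by rwa [hiface C hC, ← hU], rfl⟩

end Component

open Component in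
theorem coordinators_upperBound_general {Event : Type} (S : InteractionSig Event)
    (A B : Component Event) (E : Set Event) (𝒞 : Finset (Component Event))
    (hne : 𝒞.Nonempty)
    (hiface : ∀ C ∈ 𝒞, C.iface = E)
    (hcoord : ∀ C ∈ 𝒞, C ≠ zeroComponent Event ∧ Refines (S.prod C B) A) :
    ∃ U : Component Event, U.iface = E ∧ U ≠ zeroComponent Event ∧
      Refines (S.prod U B) A ∧ ∀ C ∈ 𝒞, CompLe C U := by
  have hne' : (↑𝒞 : Set (Component Event)).Nonempty := Finset.coe_nonempty.mpr hne
  obtain ⟨C₀, hC₀⟩ := hne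
  exact ⟨sUnion ↑𝒞, sUnion_iface_eq hne' hiface,
    sUnion_ne_zeroComponent (Finset.mem_coe.mpr hC₀) (hcoord C₀ hC₀).1,
    refines_prod_sUnion S hne' hiface fun C hC => (hcoord C hC).2,
    fun C hC => compLe_sUnion hC⟩

/-- for a commutative, associative, idempotent, monotonic product,
any finite nonempty set of (nonzero) coordinators making `B` conformant with `A`,
all sharing interface `E`, has an upper bound that is itself such a coordinator
with interface `E`. -/
theorem coordinators_upperBound {Event : Type} (S : InteractionSig Event)
    (hcomm : ∀ A B : Component Event, S.prod A B = S.prod B A)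
    (hassoc : ∀ A B C : Component Event, S.prod (S.prod A B) C = S.prod A (S.prod B C))
    (hidem : ∀ A : Component Event, S.prod A A = A)
    (hmono : ∀ A B C : Component Event, Refines B A → Refines (S.prod B C) (S.prod A C))
    (A B : Component Event) (E : Set Event) (𝒞 : Finset (Component Event))
    (hne : 𝒞.Nonempty)
    (hiface : ∀ C ∈ 𝒞, C.iface = E)
    (hcoord : ∀ C ∈ 𝒞, C ≠ zeroComponent Event ∧ Refines (S.prod C B) A) :
    ∃ U : Component Event, U.iface = E ∧ U ≠ zeroComponent Event ∧
      Refines (S.prod U B) A ∧ ∀ C ∈ 𝒞, CompLe C U :=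
  coordinators_upperBound_general S A B E 𝒞 hne hiface hcoord
end
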